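/- arXiv:2004.05035 — 3 statements merged into one kernel-verified Lean document; each statement's English description precedes it below -/
import Mathlib

section
/- Let q be a nonzero element of a field with q - q⁻¹ ≠ 0 conditions as needed, and let H be an associative unital algebra containing elements σ₁, σ₂ satisfying the Hecke relations σᵢ² = (q - q⁻¹)σᵢ + 1 for i = 1,2 and the braid relation σ₁σ₂σ₁ = σ₂σ₁σ₂. Define Ř_i(u) = σᵢ - ((q - q⁻¹)/(1 - u))·1 for u ≠ 1. Then the braided Yang–Baxter equation holds: Ř₁(u)·Ř₂(uv)·Ř₁(v) = Ř₂(v)·Ř₁(uv)·Ř₂(u) for all u, v with u, v, uv ≠ 1. -/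
set_option maxHeartbeats 1000000 in
private lemma hecke_baxterisation_aux {K H : Type*} [CommRing K] [Ring H] [Algebra K H]
    (δ a b c : K) (σ₁ σ₂ : H)
    (hs1 : σ₁ * σ₁ = δ • σ₁ + 1)
    (hs2 : σ₂ * σ₂ = δ • σ₂ + 1)
    (braid : σ₁ * σ₂ * σ₁ = σ₂ * σ₁ * σ₂)
    (key : b * a + b * c = a * c + b * δ) :
    (σ₁ - a • (1 : H)) * (σ₂ - b • (1 : H)) * (σ₁ - c • (1 : H)) =
    (σ₂ - c • (1 : H)) * (σ₁ - b • (1 : H)) * (σ₂ - a • (1 : H)) := by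
  simp only [sub_mul, mul_sub, smul_mul_assoc, mul_smul_comm, smul_smul, one_mul, mul_one,
    mul_assoc]
  rw [hs1, hs2]
  rw [show σ₁ * (σ₂ * σ₁) = σ₂ * (σ₁ * σ₂) by rw [← mul_assoc, ← mul_assoc, braid]]
  match_scalars <;> first
    | linear_combination key
    | linear_combination -key
    | linear_combination 2 * key
    | linear_combination -2 * key
    | linear_combination 3 * key
    | linear_combination -3 * key
    | ring

/-- Baxterisation of the Hecke algebra (case k = 1): if `σ₁, σ₂` satisfy the Hecke
quadratic relations and the braid relation, then `Ř_i(u) = σᵢ - ((q-q⁻¹)/(1-u))·1`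
satisfies the braided Yang--Baxter equation with multiplicative spectral parameters. -/
theorem hecke_baxterisation {K H : Type*} [Field K] [Ring H] [Algebra K H]
    (q : K) (hq : q ≠ 0) (σ₁ σ₂ : H)
    (hecke₁ : σ₁ ^ 2 = (q - q⁻¹) • σ₁ + 1)
    (hecke₂ : σ₂ ^ 2 = (q - q⁻¹) • σ₂ + 1)
    (braid : σ₁ * σ₂ * σ₁ = σ₂ * σ₁ * σ₂)
    (u v : K) (hu : u ≠ 1) (hv : v ≠ 1) (huv : u * v ≠ 1) :
    (σ₁ - ((q - q⁻¹) / (1 - u)) • (1 : H)) *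
      (σ₂ - ((q - q⁻¹) / (1 - u * v)) • (1 : H)) *
      (σ₁ - ((q - q⁻¹) / (1 - v)) • (1 : H)) =
    (σ₂ - ((q - q⁻¹) / (1 - v)) • (1 : H)) *
      (σ₁ - ((q - q⁻¹) / (1 - u * v)) • (1 : H)) *
      (σ₂ - ((q - q⁻¹) / (1 - u)) • (1 : H)) := by
  have h1 : (1 : K) - u ≠ 0 := sub_ne_zero.mpr (fun h => hu h.symm)
  have h2 : (1 : K) - v ≠ 0 := sub_ne_zero.mpr (fun h => hv h.symm)
  have h3 : (1 : K) - u * v ≠ 0 := sub_ne_zero.mpr (fun h => huv h.symm)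
  have hs1 : σ₁ * σ₁ = (q - q⁻¹) • σ₁ + 1 := by rw [← sq]; exact hecke₁
  have hs2 : σ₂ * σ₂ = (q - q⁻¹) • σ₂ + 1 := by rw [← sq]; exact hecke₂
  apply hecke_baxterisation_aux (q - q⁻¹) _ _ _ σ₁ σ₂ hs1 hs2 braid
  field_simp
  ring
end

section
/- Define for a real or complex parameter μ and integers 0 ≤ p ≤ k the classical coefficient b_p^{(k)}(μ) = (k choose p)² · (k-p)! / ((μ-p)(μ-p-1)⋯(μ-k+1)) (with b_k^{(k)}(μ) = 1, empty product convention). Then b_p^{(k)}(μ) is the limit as h → 0 of the q-coefficient (-q)^{k-p}·[k choose p]_q²·((q^{-2};q^{-2})_{k-p}/(u q^{-2p};q^{-2})_{k-p}) under the substitution q = exp(h/2), u = exp(hμ). -/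
noncomputable section

/-- The q-integer `[L]_q = (q^L - q^{-L})/(q - q⁻¹)`. -/
def qInt {K : Type*} [Field K] (q : K) (L : ℕ) : K :=
  (q ^ L - q⁻¹ ^ L) / (q - q⁻¹)

/-- The q-factorial `[L]_q! = [1]_q [2]_q ⋯ [L]_q`. -/
def qFact {K : Type*} [Field K] (q : K) (L : ℕ) : K :=
  ∏ m ∈ Finset.range L, qInt q (m + 1)

/-- The q-binomial `[L choose p]_q = [L]_q!/([L-p]_q! [p]_q!)`. -/
def qBinom {K : Type*} [Field K] (q : K) (L p : ℕ) : K :=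
  qFact q L / (qFact q (L - p) * qFact q p)

/-- The q-Pochhammer symbol `(a ; q)_p = ∏_{r=0}^{p-1} (1 - a q^r)`. -/
def qPoch {K : Type*} [Field K] (a q : K) (p : ℕ) : K :=
  ∏ r ∈ Finset.range p, (1 - a * q ^ r)

/-- The Baxterisation coefficient
`a_p^{(k,ℓ)}(u) = (-q)^{k-p} ((q⁻²;q⁻²)_{k-p}/(u q^{-2p};q⁻²)_{k-p}) [k choose p]_q [ℓ choose k-p]_q`. -/
def aCoef {K : Type*} [Field K] (q u : K) (k ℓ p : ℕ) : K :=
  (-q) ^ (k - p) *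
    (qPoch (q⁻¹ ^ 2) (q⁻¹ ^ 2) (k - p) / qPoch (u * q⁻¹ ^ (2 * p)) (q⁻¹ ^ 2) (k - p)) *
    qBinom q k p * qBinom q ℓ (k - p)


open Filter Complex Finset

local notation "lfil" => nhdsWithin (0:ℂ) {0}ᶜ

lemma slope_exp (c : ℂ) :
    Tendsto (fun h : ℂ => (Complex.exp (c * h) - 1) / h) lfil (nhds c) := by
  have hd : HasDerivAt (fun h : ℂ => Complex.exp (c * h)) c 0 := by
    have h1 : HasDerivAt (fun h : ℂ => c * h) c 0 := by
      simpa using (hasDerivAt_id (0:ℂ)).const_mul c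
    simpa using h1.cexp
  have := hasDerivAt_iff_tendsto_slope.1 hd
  refine this.congr fun h => ?_
  simp [slope_def_field, div_eq_div_iff]

lemma one_sub_exp (c : ℂ) :
    Tendsto (fun h : ℂ => (1 - Complex.exp (c * h)) / h) lfil (nhds (-c)) := by
  have := (slope_exp c).neg
  refine this.congr fun h => ?_
  rw [← neg_div, neg_sub]

lemma sinh_like (c : ℂ) :
    Tendsto (fun h : ℂ => (Complex.exp (c * h) - Complex.exp (-c * h)) / h)
      lfil (nhds (2 * c)) := by
  have := (slope_exp c).sub (slope_exp (-c))
  have h2 : c - -c = 2 * c := by ring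
  rw [h2] at this
  refine this.congr fun h => ?_
  rw [div_sub_div_same]
  ring_nf

lemma qInt_lim (L : ℕ) :
    Tendsto (fun h : ℂ => qInt (Complex.exp (h / 2)) L) lfil (nhds (L : ℂ)) := by
  have hL : (2 : ℂ) * ((L : ℂ) / 2) = (L : ℂ) := by ring
  have h1 : (2 : ℂ) * ((1 : ℂ) / 2) = 1 := by ring
  have := (sinh_like ((L : ℂ) / 2)).div (sinh_like ((1 : ℂ) / 2)) (by rw [h1]; exact one_ne_zero)
  rw [hL, h1, div_one] at this
  refine this.congr' ?_
  filter_upwards [self_mem_nhdsWithin] with h hh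
  have hh0 : h ≠ 0 := hh
  have e1 : Complex.exp (h / 2) ^ L = Complex.exp ((L : ℂ) / 2 * h) := by
    rw [← Complex.exp_nat_mul]; ring_nf
  have e2 : (Complex.exp (h / 2))⁻¹ ^ L = Complex.exp (-((L : ℂ) / 2) * h) := by
    rw [← Complex.exp_neg, ← Complex.exp_nat_mul]; ring_nf
  have e3 : (Complex.exp (h / 2))⁻¹ = Complex.exp (-(1 / 2 : ℂ) * h) := by
    rw [← Complex.exp_neg]; ring_nf
  have e4 : Complex.exp (h / 2) = Complex.exp ((1 / 2 : ℂ) * h) := by ring_nf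
  show (Complex.exp ((L : ℂ) / 2 * h) - Complex.exp (-((L : ℂ) / 2) * h)) / h /
      ((Complex.exp ((1 / 2 : ℂ) * h) - Complex.exp (-(1 / 2 : ℂ) * h)) / h) = _
  rw [div_div_div_cancel_right₀ hh0, qInt, e1, e2, e3, e4]

lemma qFact_lim (L : ℕ) :
    Tendsto (fun h : ℂ => qFact (Complex.exp (h / 2)) L) lfil
      (nhds ((Nat.factorial L : ℂ))) := by
  have := tendsto_finset_prod (f := fun (m : ℕ) (h : ℂ) => qInt (Complex.exp (h / 2)) (m + 1))
    (a := fun m : ℕ => ((m : ℂ) + 1)) (Finset.range L)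
    (fun m _ => by simpa using qInt_lim (m + 1))
  have hprod : (∏ m ∈ Finset.range L, ((m : ℂ) + 1)) = (Nat.factorial L : ℂ) := by
    rw [← Finset.prod_range_add_one_eq_factorial]
    push_cast
    rfl
  rw [hprod] at this
  exact this

lemma qBinom_lim (L p : ℕ) (hp : p ≤ L) :
    Tendsto (fun h : ℂ => qBinom (Complex.exp (h / 2)) L p) lfil
      (nhds ((Nat.choose L p : ℂ))) := by
  have hne : ((Nat.factorial (L - p) : ℂ) * (Nat.factorial p : ℂ)) ≠ 0 :=
    mul_ne_zero (Nat.cast_ne_zero.2 (Nat.factorial_ne_zero _))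
      (Nat.cast_ne_zero.2 (Nat.factorial_ne_zero _))
  have := (qFact_lim L).div ((qFact_lim (L - p)).mul (qFact_lim p)) hne
  have hval : (Nat.factorial L : ℂ) / ((Nat.factorial (L - p) : ℂ) * (Nat.factorial p : ℂ))
      = (Nat.choose L p : ℂ) := by
    rw [Nat.cast_choose ℂ hp]
    ring
  rw [hval] at this
  exact this


lemma expinv (h : ℂ) (m : ℕ) :
    (Complex.exp (h / 2))⁻¹ ^ m = Complex.exp (-(m : ℂ) * h / 2) := by
  rw [← Complex.exp_neg, ← Complex.exp_nat_mul]
  congr 1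
  ring

lemma poch_ratio (p n : ℕ) (μ : ℂ)
    (hD : ∀ r ∈ Finset.range n, ((p : ℂ) + r) - μ ≠ 0) :
    Tendsto (fun h : ℂ =>
      qPoch ((Complex.exp (h / 2))⁻¹ ^ 2) ((Complex.exp (h / 2))⁻¹ ^ 2) n /
        qPoch (Complex.exp (h * μ) * (Complex.exp (h / 2))⁻¹ ^ (2 * p))
          ((Complex.exp (h / 2))⁻¹ ^ 2) n)
      lfil (nhds ((Nat.factorial n : ℂ) / ∏ r ∈ Finset.range n, (((p : ℂ) + r) - μ))) := by
  have num : Tendsto (fun h : ℂ =>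
      ∏ r ∈ Finset.range n, ((1 - Complex.exp ((-((r : ℂ) + 1)) * h)) / h))
      lfil (nhds (∏ r ∈ Finset.range n, ((r : ℂ) + 1))) := by
    refine tendsto_finset_prod _ fun r _ => ?_
    simpa using one_sub_exp (-((r : ℂ) + 1))
  have den : Tendsto (fun h : ℂ =>
      ∏ r ∈ Finset.range n, ((1 - Complex.exp ((μ - p - r) * h)) / h))
      lfil (nhds (∏ r ∈ Finset.range n, (((p : ℂ) + r) - μ))) := by
    refine tendsto_finset_prod _ fun r _ => ?_
    have h2 : -(μ - (p : ℂ) - r) = ((p : ℂ) + r) - μ := by ring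
    have := one_sub_exp (μ - (p : ℂ) - r)
    rw [h2] at this
    exact this
  have hDne : (∏ r ∈ Finset.range n, (((p : ℂ) + r) - μ)) ≠ 0 :=
    Finset.prod_ne_zero_iff.2 hD
  have hfact : (∏ r ∈ Finset.range n, ((r : ℂ) + 1)) = (Nat.factorial n : ℂ) := by
    rw [← Finset.prod_range_add_one_eq_factorial]
    push_cast
    rfl
  have main := num.div den hDne
  rw [hfact] at main
  refine main.congr' ?_
  filter_upwards [self_mem_nhdsWithin] with h hh
  have hh0 : (h : ℂ) ≠ 0 := hh
  simp only [Pi.div_apply]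
  rw [Finset.prod_div_distrib, Finset.prod_div_distrib, Finset.prod_const, Finset.card_range,
    div_div_div_cancel_right₀ (pow_ne_zero n hh0)]
  unfold qPoch
  congr 1
  · refine Finset.prod_congr rfl fun r _ => ?_
    congr 1
    rw [expinv h 2, ← Complex.exp_nat_mul, ← Complex.exp_add]
    congr 1
    push_cast
    ring
  · refine Finset.prod_congr rfl fun r _ => ?_
    congr 1
    rw [expinv h 2, expinv h (2 * p), ← Complex.exp_nat_mul, ← Complex.exp_add,
      ← Complex.exp_add]
    congr 1
    push_cast
    ring

/-- Scaling limit of the Baxterisation coefficients: under the substitution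
`q = exp(h/2)`, `u = exp(hμ)`, the q-coefficient
`(-q)^{k-p} [k choose p]_q² ((q⁻²;q⁻²)_{k-p}/(u q^{-2p};q⁻²)_{k-p})`
tends, as `h → 0`, to the classical coefficient
`(k choose p)² (k-p)! / ((μ-p)(μ-p-1)⋯(μ-k+1))`. -/
theorem scaling_limit_coefficient (k p : ℕ) (hp : p ≤ k) (μ : ℂ)
    (hμ : ∀ j : ℕ, p ≤ j → j < k → μ ≠ (j : ℂ)) :
    Filter.Tendsto
      (fun h : ℂ =>
        (-(Complex.exp (h / 2))) ^ (k - p) *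
          (qBinom (Complex.exp (h / 2)) k p) ^ 2 *
          (qPoch ((Complex.exp (h / 2))⁻¹ ^ 2) ((Complex.exp (h / 2))⁻¹ ^ 2) (k - p) /
            qPoch (Complex.exp (h * μ) * (Complex.exp (h / 2))⁻¹ ^ (2 * p))
              ((Complex.exp (h / 2))⁻¹ ^ 2) (k - p)))
      (nhdsWithin 0 {0}ᶜ)
      (nhds ((k.choose p : ℂ) ^ 2 * (Nat.factorial (k - p) : ℂ) /
        ∏ j ∈ Finset.Ico p k, (μ - (j : ℂ)))) := by
  have hD : ∀ r ∈ Finset.range (k - p), ((p : ℂ) + r) - μ ≠ 0 := by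
    intro r hr
    rw [Finset.mem_range] at hr
    have h1 : μ ≠ ((p + r : ℕ) : ℂ) :=
      hμ (p + r) (Nat.le_add_right p r) (by omega)
    rw [sub_ne_zero]
    intro hEq
    exact h1 (by push_cast; exact hEq.symm)
  have A : Tendsto (fun h : ℂ => (-(Complex.exp (h / 2))) ^ (k - p)) lfil
      (nhds ((-1 : ℂ) ^ (k - p))) := by
    have hc : Continuous fun h : ℂ => (-(Complex.exp (h / 2))) ^ (k - p) := by
      fun_prop
    have := hc.tendsto 0
    simp only [zero_div, Complex.exp_zero] at this
    exact this.mono_left nhdsWithin_le_nhds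
  have B := qBinom_lim k p hp
  have R := poch_ratio p (k - p) μ hD
  have main := (A.mul (B.pow 2)).mul R
  set D := ∏ r ∈ Finset.range (k - p), (((p : ℂ) + r) - μ) with hDdef
  have hDne : D ≠ 0 := Finset.prod_ne_zero_iff.2 hD
  have hE : (∏ j ∈ Finset.Ico p k, (μ - (j : ℂ))) = (-1 : ℂ) ^ (k - p) * D := by
    rw [Finset.prod_Ico_eq_prod_range, hDdef]
    have : ((-1 : ℂ)) ^ (k - p) = ∏ _r ∈ Finset.range (k - p), (-1 : ℂ) := by
      rw [Finset.prod_const, Finset.card_range]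
    rw [this, ← Finset.prod_mul_distrib]
    refine Finset.prod_congr rfl fun r _ => ?_
    push_cast
    ring
  have hval : ((k.choose p : ℂ)) ^ 2 * (Nat.factorial (k - p) : ℂ) /
      ∏ j ∈ Finset.Ico p k, (μ - (j : ℂ)) =
      (-1 : ℂ) ^ (k - p) * (k.choose p : ℂ) ^ 2 * ((Nat.factorial (k - p) : ℂ) / D) := by
    rw [hE]
    have hne1 : ((-1 : ℂ) ^ (k - p)) ≠ 0 := pow_ne_zero _ (by norm_num)
    field_simp
    ring_nf
    have h2 : ((-1 : ℂ)) ^ ((k - p) * 2) = 1 := by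
      rw [mul_comm, pow_mul]
      norm_num
    rw [h2, mul_one]
  rw [hval]
  exact main
end
end

section
/- In the Hecke algebra H_{2k}(q) with generators σ₁,…,σ_{2k-1}, the full elementary braiding Σ := (σ_k σ_{k+1}⋯σ_{2k-1})(σ_{k-1}σ_k⋯σ_{2k-2})⋯(σ₁σ₂⋯σ_k) satisfies, for any i, j with 1 ≤ i ≤ k-1: Σ·σᵢ = σ_{i+k}·Σ and Σ·σ_{i+k} = σᵢ·Σ. -/
namespace FullBraidAux

variable {H : Type*} [Ring H]

/-- increasing run σ_a σ_{a+1} ⋯ σ_{b-1} -/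
def Ep (σ : ℕ → H) (a b : ℕ) : H := ((List.Ico a b).map σ).prod
/-- decreasing run σ_{b-1} ⋯ σ_a -/
def Fp (σ : ℕ → H) (a b : ℕ) : H := (((List.Ico a b).reverse).map σ).prod

lemma Ep_empty (σ : ℕ → H) (a : ℕ) : Ep σ a a = 1 := by simp [Ep]
lemma Ep_single (σ : ℕ → H) (a : ℕ) : Ep σ a (a + 1) = σ a := by
  simp [Ep, List.Ico.succ_singleton]
lemma Fp_empty (σ : ℕ → H) (a : ℕ) : Fp σ a a = 1 := by simp [Fp]
lemma Fp_single (σ : ℕ → H) (a : ℕ) : Fp σ a (a + 1) = σ a := by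
  simp [Fp, List.Ico.succ_singleton]

lemma Ep_congr (σ : ℕ → H) {a b a' b' : ℕ} (h1 : a = a') (h2 : b = b') :
    Ep σ a b = Ep σ a' b' := by rw [h1, h2]

lemma Fp_congr (σ : ℕ → H) {a b a' b' : ℕ} (h1 : a = a') (h2 : b = b') :
    Fp σ a b = Fp σ a' b' := by rw [h1, h2]

lemma Ep_split (σ : ℕ → H) {a b c : ℕ} (h1 : a ≤ b) (h2 : b ≤ c) :
    Ep σ a c = Ep σ a b * Ep σ b c := by
  rw [Ep, Ep, Ep, ← List.Ico.append_consecutive h1 h2, List.map_append, List.prod_append]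

lemma Fp_split (σ : ℕ → H) {a b c : ℕ} (h1 : a ≤ b) (h2 : b ≤ c) :
    Fp σ a c = Fp σ b c * Fp σ a b := by
  rw [Fp, Fp, Fp, ← List.Ico.append_consecutive h1 h2, List.reverse_append,
    List.map_append, List.prod_append]

lemma commute_Ep (σ : ℕ → H) {x : H} {a b : ℕ}
    (h : ∀ m, a ≤ m → m < b → Commute x (σ m)) : Commute x (Ep σ a b) := by
  apply Commute.list_prod_right
  intro y hy
  simp only [List.mem_map, List.Ico.mem] at hy
  obtain ⟨m, ⟨h1, h2⟩, rfl⟩ := hy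
  exact h m h1 h2

lemma commute_Fp (σ : ℕ → H) {x : H} {a b : ℕ}
    (h : ∀ m, a ≤ m → m < b → Commute x (σ m)) : Commute x (Fp σ a b) := by
  apply Commute.list_prod_right
  intro y hy
  simp only [List.mem_map, List.mem_reverse, List.Ico.mem] at hy
  obtain ⟨m, ⟨h1, h2⟩, rfl⟩ := hy
  exact h m h1 h2

section WithRel

variable (σ : ℕ → H) (N : ℕ)
variable (braid : ∀ i : ℕ, 1 ≤ i → i + 1 < N →
    σ i * σ (i + 1) * σ i = σ (i + 1) * σ i * σ (i + 1))
variable (far : ∀ i j : ℕ, 1 ≤ i → i + 1 < j → j < N → σ i * σ j = σ j * σ i)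

include far in
lemma commute_far_Ep {x a b : ℕ} (hx1 : 1 ≤ x) (hxN : x < N) (ha : 1 ≤ a) (hb : b ≤ N)
    (hsep : ∀ m, a ≤ m → m < b → x + 1 < m ∨ m + 1 < x) :
    Commute (σ x) (Ep σ a b) := by
  apply commute_Ep
  intro m hm1 hm2
  rcases hsep m hm1 hm2 with h | h
  · exact far x m hx1 h (by omega)
  · exact (far m x (by omega) h (by omega)).symm

include far in
lemma commute_far_Fp {x a b : ℕ} (hx1 : 1 ≤ x) (hxN : x < N) (ha : 1 ≤ a) (hb : b ≤ N)
    (hsep : ∀ m, a ≤ m → m < b → x + 1 < m ∨ m + 1 < x) :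
    Commute (σ x) (Fp σ a b) := by
  apply commute_Fp
  intro m hm1 hm2
  rcases hsep m hm1 hm2 with h | h
  · exact far x m hx1 h (by omega)
  · exact (far m x (by omega) h (by omega)).symm

include braid far in
/-- shift lemma for increasing runs: `(σ_a⋯σ_{b-1}) σ_j = σ_{j+1} (σ_a⋯σ_{b-1})`. -/
lemma shiftE {a b j : ℕ} (ha : 1 ≤ a) (hb : b ≤ N) (haj : a ≤ j) (hj : j + 2 ≤ b) :
    Ep σ a b * σ j = σ (j + 1) * Ep σ a b := by
  have e1 : Ep σ a b = Ep σ a j * (σ j * (σ (j + 1) * Ep σ (j + 2) b)) := by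
    rw [Ep_split σ haj (by omega : j ≤ b), Ep_split σ (by omega : j ≤ j + 1) (by omega),
      Ep_split σ (by omega : j + 1 ≤ j + 2) (by omega), Ep_single, Ep_single]
  have c1 : Commute (σ j) (Ep σ (j + 2) b) :=
    commute_far_Ep σ N far (by omega) (by omega) (by omega) hb (fun m hm1 hm2 => by omega)
  have c2 : Commute (σ (j + 1)) (Ep σ a j) :=
    commute_far_Ep σ N far (by omega) (by omega) ha (by omega) (fun m hm1 hm2 => by omega)
  have b2 : ∀ y : H, σ j * (σ (j + 1) * (σ j * y)) = σ (j + 1) * (σ j * (σ (j + 1) * y)) := by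
    intro y
    simp only [← mul_assoc]
    rw [braid j (by omega) (by omega)]
  rw [e1]
  simp only [mul_assoc]
  rw [← c1.eq, b2 (Ep σ (j + 2) b)]
  rw [← mul_assoc, ← c2.eq, mul_assoc]

include braid far in
/-- shift lemma for decreasing runs: `(σ_{b-1}⋯σ_a) σ_{j+1} = σ_j (σ_{b-1}⋯σ_a)`. -/
lemma shiftF {a b j : ℕ} (ha : 1 ≤ a) (hb : b ≤ N) (haj : a ≤ j) (hj : j + 2 ≤ b) :
    Fp σ a b * σ (j + 1) = σ j * Fp σ a b := by
  have e1 : Fp σ a b = Fp σ (j + 2) b * (σ (j + 1) * (σ j * Fp σ a j)) := by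
    rw [Fp_split σ (haj) (by omega : j ≤ b), Fp_split σ (by omega : j ≤ j + 1) (by omega),
      Fp_split σ (by omega : j + 1 ≤ j + 2) (by omega), Fp_single, Fp_single]
    simp only [mul_assoc]
  have c1 : Commute (σ (j + 1)) (Fp σ a j) :=
    commute_far_Fp σ N far (by omega) (by omega) ha (by omega) (fun m hm1 hm2 => by omega)
  have c2 : Commute (σ j) (Fp σ (j + 2) b) :=
    commute_far_Fp σ N far (by omega) (by omega) (by omega) hb (fun m hm1 hm2 => by omega)
  have b2 : ∀ y : H, σ (j + 1) * (σ j * (σ (j + 1) * y)) = σ j * (σ (j + 1) * (σ j * y)) := by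
    intro y
    simp only [← mul_assoc]
    rw [braid j (by omega) (by omega)]
  rw [e1]
  simp only [mul_assoc]
  rw [← c1.eq, b2 (Fp σ a j)]
  rw [← mul_assoc, ← c2.eq, mul_assoc]

include far in
/-- peel off the first column of a staircase of rows. -/
lemma peel : ∀ (m t n : ℕ), m ≤ t → t + n + 1 ≤ N →
    ((List.range m).map (fun r => Ep σ (t - r) (t - r + (n + 1)))).prod
      = Fp σ (t - m + 1) (t + 1) *
        ((List.range m).map (fun r => Ep σ (t - r + 1) (t - r + 1 + n))).prod := by
  intro m
  induction m with
  | zero =>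
    intro t n _ _
    simp [Fp_empty]
  | succ m ih =>
    intro t n hm hN
    rw [List.range_succ, List.map_append, List.map_append, List.prod_append, List.prod_append]
    rw [ih t n (by omega) hN]
    simp only [List.map_cons, List.map_nil, List.prod_cons, List.prod_nil, mul_one]
    have erow : Ep σ (t - m) (t - m + (n + 1)) = σ (t - m) * Ep σ (t - m + 1) (t - m + 1 + n) := by
      rw [Ep_split σ (by omega : t - m ≤ t - m + 1) (by omega), Ep_single]
      rw [Ep_congr σ (rfl : t - m + 1 = t - m + 1) (by omega : t - m + (n + 1) = t - m + 1 + n)]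
    rw [erow]
    -- commute σ (t - m) past the short rows product Q
    have cQ : Commute (σ (t - m))
        (((List.range m).map (fun r => Ep σ (t - r + 1) (t - r + 1 + n))).prod) := by
      apply Commute.list_prod_right
      intro y hy
      simp only [List.mem_map, List.mem_range] at hy
      obtain ⟨r, hr, rfl⟩ := hy
      exact commute_far_Ep σ N far (by omega) (by omega) (by omega) (by omega)
        (fun l hl1 hl2 => by omega)
    have fF : Fp σ (t - m + 1) (t + 1) * σ (t - m) = Fp σ (t - (m + 1) + 1) (t + 1) := by
      have h5 : Fp σ (t - m) (t + 1) = Fp σ (t - m + 1) (t + 1) * Fp σ (t - m) (t - m + 1) :=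
        Fp_split σ (by omega) (by omega)
      rw [Fp_single] at h5
      rw [← h5]
      exact Fp_congr σ (by omega) rfl
    calc Fp σ (t - m + 1) (t + 1) *
          ((List.range m).map (fun r => Ep σ (t - r + 1) (t - r + 1 + n))).prod *
          (σ (t - m) * Ep σ (t - m + 1) (t - m + 1 + n))
        = Fp σ (t - m + 1) (t + 1) * σ (t - m) *
          (((List.range m).map (fun r => Ep σ (t - r + 1) (t - r + 1 + n))).prod *
            Ep σ (t - m + 1) (t - m + 1 + n)) := by
          simp only [mul_assoc]
          rw [← mul_assoc (((List.range m).map _).prod) (σ (t - m)), ← cQ.eq, mul_assoc]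
      _ = Fp σ (t - (m + 1) + 1) (t + 1) *
          (((List.range m).map (fun r => Ep σ (t - r + 1) (t - r + 1 + n))).prod *
            Ep σ (t - m + 1) (t - m + 1 + n)) := by rw [fF]

include far in
/-- rectangle transpose: row form equals column form (only far commutation is used). -/
lemma rect : ∀ (n t m : ℕ), m ≤ t → t + n ≤ N →
    ((List.range m).map (fun r => Ep σ (t - r) (t - r + n))).prod
      = ((List.range n).map (fun c => Fp σ (t - m + 1 + c) (t + 1 + c))).prod := by
  intro n
  induction n with
  | zero =>
    intro t m _ _
    simp [Ep_empty]
  | succ n ih =>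
    intro t m hm hN
    rw [peel σ N far m t n hm (by omega)]
    have short : ((List.range m).map (fun r => Ep σ (t - r + 1) (t - r + 1 + n))).prod
        = ((List.range m).map (fun r => Ep σ (t + 1 - r) (t + 1 - r + n))).prod := by
      congr 1
      apply List.map_congr_left
      intro r hr
      simp only [List.mem_range] at hr
      exact Ep_congr σ (by omega) (by omega)
    rw [short, ih (t + 1) m (by omega) (by omega)]
    rw [List.range_succ_eq_map, List.map_cons, List.prod_cons, List.map_map]
    have hfirst : Fp σ (t - m + 1) (t + 1) = Fp σ (t - m + 1 + 0) (t + 1 + 0) :=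
      Fp_congr σ (by omega) (by omega)
    rw [hfirst]
    congr 1
    congr 1
    apply List.map_congr_left
    intro c hc
    simp only [Function.comp_apply, Nat.succ_eq_add_one]
    exact Fp_congr σ (by omega) (by omega)

include braid far in
/-- pushing a generator from the right through all the rows. -/
lemma pushRows : ∀ (m : ℕ) (a n j : ℕ), m ≤ a → a + n ≤ N → a + 1 ≤ j + m →
    j + m + 1 ≤ a + n →
    ((List.range m).map (fun r => Ep σ (a - r) (a - r + n))).prod * σ j
      = σ (j + m) * ((List.range m).map (fun r => Ep σ (a - r) (a - r + n))).prod := by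
  intro m
  induction m with
  | zero =>
    intro a n j _ _ _ _
    simp
  | succ m ih =>
    intro a n j hm hN h1 h2
    rw [List.range_succ, List.map_append, List.prod_append]
    simp only [List.map_cons, List.map_nil, List.prod_cons, List.prod_nil, mul_one]
    rw [mul_assoc,
      shiftE σ N braid far (by omega) (by omega) (by omega : a - m ≤ j) (by omega),
      ← mul_assoc, ih a n (j + 1) (by omega) hN (by omega) (by omega), mul_assoc,
      show j + 1 + m = j + (m + 1) by omega]

include braid far in
/-- pushing a generator from the right through all the columns. -/
lemma pushCols : ∀ (m : ℕ) (a n j : ℕ), 1 ≤ a → a ≤ j → j + 2 ≤ a + n →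
    a + m + n ≤ N + 1 →
    ((List.range m).map (fun c => Fp σ (a + c) (a + c + n))).prod * σ (j + m)
      = σ j * ((List.range m).map (fun c => Fp σ (a + c) (a + c + n))).prod := by
  intro m
  induction m with
  | zero =>
    intro a n j _ _ _ _
    simp
  | succ m ih =>
    intro a n j ha haj hj hN
    rw [List.range_succ, List.map_append, List.prod_append]
    simp only [List.map_cons, List.map_nil, List.prod_cons, List.prod_nil, mul_one]
    have step : Fp σ (a + m) (a + m + n) * σ (j + (m + 1))
        = σ (j + m) * Fp σ (a + m) (a + m + n) := by
      have h6 := shiftF σ N braid far (a := a + m) (b := a + m + n) (j := j + m)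
        (by omega) (by omega) (by omega) (by omega)
      rwa [show j + m + 1 = j + (m + 1) by omega] at h6
    rw [mul_assoc, step, ← mul_assoc, ih a n j ha haj hj (by omega), mul_assoc]

end WithRel

end FullBraidAux

open FullBraidAux in
/-- In the Hecke algebra `H_{2k}(q)` (generators `σ 1, …, σ (2k-1)`), the full
elementary braiding `Σ = (σ_k σ_{k+1}⋯σ_{2k-1})(σ_{k-1}⋯σ_{2k-2})⋯(σ₁⋯σ_k)`
intertwines the two blocks of generators: `Σ·σᵢ = σ_{i+k}·Σ` and `Σ·σ_{i+k} = σᵢ·Σ`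
for `1 ≤ i ≤ k-1`. -/
theorem full_braiding_intertwines (k : ℕ) (hk : 1 ≤ k)
    {H : Type*} [Ring H] [Algebra ℂ H] (q : ℂ) (hq : q ≠ 0) (σ : ℕ → H)
    (hecke : ∀ i : ℕ, 1 ≤ i → i < 2 * k → σ i ^ 2 = (q - q⁻¹) • σ i + 1)
    (braid : ∀ i : ℕ, 1 ≤ i → i + 1 < 2 * k →
      σ i * σ (i + 1) * σ i = σ (i + 1) * σ i * σ (i + 1))
    (farcomm : ∀ i j : ℕ, 1 ≤ i → i + 1 < j → j < 2 * k → σ i * σ j = σ j * σ i) :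
    let Sig : H :=
      (((List.range k).map (fun r => (((List.Ico (k - r) (2 * k - r)).map σ).prod))).prod)
    ∀ i : ℕ, 1 ≤ i → i ≤ k - 1 →
      Sig * σ i = σ (i + k) * Sig ∧ Sig * σ (i + k) = σ i * Sig := by
  intro Sig i hi1 hik
  have hik' : i + 1 ≤ k := by omega
  -- rewrite Sig in row form
  have hrow : Sig = ((List.range k).map (fun r => Ep σ (k - r) (k - r + k))).prod := by
    show (((List.range k).map
      (fun r => (((List.Ico (k - r) (2 * k - r)).map σ).prod))).prod) = _
    congr 1
    apply List.map_congr_left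
    intro r hr
    simp only [List.mem_range] at hr
    show Ep σ (k - r) (2 * k - r) = Ep σ (k - r) (k - r + k)
    exact Ep_congr σ rfl (by omega)
  constructor
  · rw [hrow]
    exact pushRows σ (2 * k) braid farcomm k k k i (le_refl k) (by omega) (by omega) (by omega)
  · -- column form
    have hcol : Sig = ((List.range k).map (fun c => Fp σ (1 + c) (1 + c + k))).prod := by
      rw [hrow, rect σ (2 * k) farcomm k k k (le_refl k) (by omega)]
      congr 1
      apply List.map_congr_left
      intro c hc
      simp only [List.mem_range] at hc
      exact Fp_congr σ (by omega) (by omega)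
    rw [hcol]
    exact pushCols σ (2 * k) braid farcomm k 1 k i (le_refl 1) (by omega) (by omega) (by omega)
end
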